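/- The axiom scheme A2 is valid in all Nelsonian conditional models: for all formulas φ, ψ, χ, the formula (~(φ □→ ψ) ∧ (φ □→ χ)) → ~(φ □→ (ψ ∨ ~χ)) is verified at every world of every Nelsonian conditional model. -/

import Mathlib

inductive CForm : Type where
  | var : Nat → CForm
  | and : CForm → CForm → CForm
  | or  : CForm → CForm → CForm
  | neg : CForm → CForm
  | imp : CForm → CForm → CForm
  | cond : CForm → CForm → CForm

/-- A Nelsonian conditional model: a Nelsonian model together with a
bi-set-indexed accessibility relation satisfying (c1) and (c2). -/
structure CNModel where
  W : Type
  le : W → W → Prop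
  refl : ∀ w, le w w
  trans : ∀ {a b c}, le a b → le b c → le a c
  Vp : Nat → W → Prop
  Vn : Nat → W → Prop
  monoP : ∀ (n : Nat) {w v}, le w v → Vp n w → Vp n v
  monoN : ∀ (n : Nat) {w v}, le w v → Vn n w → Vn n v
  R : W → Set W × Set W → W → Prop
  c1 : ∀ (XY : Set W × Set W) {w w' v}, le w w' → R w XY v → ∃ v', R w' XY v' ∧ le v v'
  c2 : ∀ (XY : Set W × Set W) {w v v'}, R w XY v → le v v' → ∃ w', le w w' ∧ R w' XY v'

/-- Verification (`true`) and falsification (`false`) in a Nelsonian conditional model. -/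
def CNModel.sat (M : CNModel) : CForm → Bool → M.W → Prop
  | .var n, true, w => M.Vp n w
  | .var n, false, w => M.Vn n w
  | .and φ ψ, true, w => M.sat φ true w ∧ M.sat ψ true w
  | .and φ ψ, false, w => M.sat φ false w ∨ M.sat ψ false w
  | .or φ ψ, true, w => M.sat φ true w ∨ M.sat ψ true w
  | .or φ ψ, false, w => M.sat φ false w ∧ M.sat ψ false w
  | .neg φ, b, w => M.sat φ (!b) w
  | .imp φ ψ, true, w => ∀ v, M.le w v → M.sat φ true v → M.sat ψ true v
  | .imp φ ψ, false, w => M.sat φ true w ∧ M.sat ψ false w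
  | .cond φ ψ, true, w =>
      ∀ v u, M.le w v → M.R v ({x | M.sat φ true x}, {x | M.sat φ false x}) u →
        M.sat ψ true u
  | .cond φ ψ, false, w =>
      ∃ u, M.R w ({x | M.sat φ true x}, {x | M.sat φ false x}) u ∧ M.sat ψ false u

/-- N4CK-validity: verified at every world of every Nelsonian conditional model. -/
def CValid (φ : CForm) : Prop := ∀ (M : CNModel) (w : M.W), M.sat φ true w

theorem CNModel.sat_of_sat_cond_of_R {M : CNModel} {φ χ : CForm} {w u : M.W}
    (h : M.sat (.cond φ χ) true w)
    (hR : M.R w ({x | M.sat φ true x}, {x | M.sat φ false x}) u) :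
    M.sat χ true u :=
  h w u (M.refl w) hR

theorem a2_valid (φ ψ χ : CForm) :
    CValid (.imp (.and (.neg (.cond φ ψ)) (.cond φ χ))
                 (.neg (.cond φ (.or ψ (.neg χ))))) := by
  rintro M - v - ⟨⟨u, hR, hψ⟩, hχ⟩
  exact ⟨u, hR, hψ, CNModel.sat_of_sat_cond_of_R hχ hR⟩
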